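/- For every λ₀ ∈ ℂ with λ₀ ≠ 0, there is a ℂ-algebra homomorphism ρ : H →ₐ[ℂ] Module.End ℂ P with ρ (x i) = xᵢ, ρ (p i) = λ₀ • ∂ᵢ and ρ ƛ = λ₀ • 1; the range of ρ equals the Weyl algebra Aₙ(ℂ), and its kernel is exactly the two-sided ideal of H generated by ƛ − algebraMap ℂ H λ₀, i.e. for all h ∈ H, ρ h = 0 ↔ h ∈ TwoSidedIdeal.span {ƛ − algebraMap ℂ H λ₀}. (Property (1) of the canonical family in Section 5.2: the fiber Q_{λ₀}Ω_{𝔸ⁿ} over λ₀ ≠ 0 is isomorphic to Space 𝒟 = Space Aₙ(ℂ).) -/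
import Mathlib


/-- The generator `Xᵢ` of the free algebra `F = FreeAlgebra ℂ ((Fin n ⊕ Fin n) ⊕ Unit)`. -/
noncomputable def fwX (n : ℕ) (i : Fin n) : FreeAlgebra ℂ ((Fin n ⊕ Fin n) ⊕ Unit) :=
  FreeAlgebra.ι ℂ (Sum.inl (Sum.inl i))

/-- The generator `Pᵢ` of the free algebra `F`. -/
noncomputable def fwP (n : ℕ) (i : Fin n) : FreeAlgebra ℂ ((Fin n ⊕ Fin n) ⊕ Unit) :=
  FreeAlgebra.ι ℂ (Sum.inl (Sum.inr i))

/-- The generator `Λ` of the free algebra `F`. -/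
noncomputable def fwL (n : ℕ) : FreeAlgebra ℂ ((Fin n ⊕ Fin n) ⊕ Unit) :=
  FreeAlgebra.ι ℂ (Sum.inr Unit.unit)

/-- The defining relations of the homogenized Weyl algebra (the coordinate ring of
the canonical family `Q_{𝔸¹}Ω_{𝔸ⁿ}` of deformation quantizations of the cotangent
bundle of `𝔸ⁿ`, Section 5.2):
`[xᵢ,xⱼ] = 0`, `[pᵢ,pⱼ] = 0`, `[ƛ,xᵢ] = 0`, `[ƛ,pᵢ] = 0`,
`[pᵢ,xⱼ] = δᵢⱼ ƛ`. -/
inductive WeylRel (n : ℕ) :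
    FreeAlgebra ℂ ((Fin n ⊕ Fin n) ⊕ Unit) →
    FreeAlgebra ℂ ((Fin n ⊕ Fin n) ⊕ Unit) → Prop
  | xx (i j : Fin n) : WeylRel n (fwX n i * fwX n j) (fwX n j * fwX n i)
  | pp (i j : Fin n) : WeylRel n (fwP n i * fwP n j) (fwP n j * fwP n i)
  | lx (i : Fin n) : WeylRel n (fwL n * fwX n i) (fwX n i * fwL n)
  | lp (i : Fin n) : WeylRel n (fwL n * fwP n i) (fwP n i * fwL n)
  | px_same (i : Fin n) : WeylRel n (fwP n i * fwX n i) (fwX n i * fwP n i + fwL n)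
  | px_ne (i j : Fin n) : i ≠ j → WeylRel n (fwP n i * fwX n j) (fwX n j * fwP n i)

/-- The homogenized Weyl algebra `H`. -/
noncomputable abbrev HWeyl (n : ℕ) := RingQuot (WeylRel n)

/-- The element `x i` of `H`. -/
noncomputable def hx (n : ℕ) (i : Fin n) : HWeyl n :=
  RingQuot.mkAlgHom ℂ (WeylRel n) (fwX n i)

/-- The element `p i` of `H`. -/
noncomputable def hp (n : ℕ) (i : Fin n) : HWeyl n :=
  RingQuot.mkAlgHom ℂ (WeylRel n) (fwP n i)

/-- The central element `ƛ` of `H`. -/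
noncomputable def hl (n : ℕ) : HWeyl n :=
  RingQuot.mkAlgHom ℂ (WeylRel n) (fwL n)

open MvPolynomial in
/-- The Weyl algebra `Aₙ(ℂ)`, realized as the `ℂ`-subalgebra of
`Module.End ℂ (MvPolynomial (Fin n) ℂ)` generated by the multiplication operators
`xᵢ` (multiplication by the variable `X i`) and the formal partial derivative
operators `∂ᵢ = pderiv i`. -/
noncomputable def WeylAlgebra (n : ℕ) :
    Subalgebra ℂ (Module.End ℂ (MvPolynomial (Fin n) ℂ)) :=
  Algebra.adjoin ℂ
    ((Set.range fun i : Fin n =>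
        (LinearMap.mulLeft ℂ (X i) : Module.End ℂ (MvPolynomial (Fin n) ℂ))) ∪
     (Set.range fun i : Fin n =>
        ((pderiv i).toLinearMap : Module.End ℂ (MvPolynomial (Fin n) ℂ))))


open MvPolynomial

variable {n : ℕ}

noncomputable abbrev EndP (n : ℕ) := Module.End ℂ (MvPolynomial (Fin n) ℂ)

noncomputable def opX (n : ℕ) (i : Fin n) : EndP n := LinearMap.mulLeft ℂ (X i)
noncomputable def opD (n : ℕ) (i : Fin n) : EndP n := (pderiv i).toLinearMap

lemma opX_apply (i : Fin n) (f : MvPolynomial (Fin n) ℂ) : opX n i f = X i * f := rfl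
lemma opD_apply (i : Fin n) (f : MvPolynomial (Fin n) ℂ) : opD n i f = pderiv i f := rfl

lemma opX_comm (i j : Fin n) : opX n i * opX n j = opX n j * opX n i := by
  apply LinearMap.ext
  intro f
  show X i * (X j * f) = X j * (X i * f)
  ring

lemma pderiv_X' (i j : Fin n) :
    pderiv i (X j : MvPolynomial (Fin n) ℂ) = if i = j then 1 else 0 := by
  split_ifs with h
  · subst h; exact pderiv_X_self i
  · exact pderiv_X_of_ne (Ne.symm h)

lemma opD_comm (i j : Fin n) : opD n i * opD n j = opD n j * opD n i := by
  apply LinearMap.ext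
  intro f
  induction f using MvPolynomial.induction_on with
  | C a => simp [opD, Module.End.mul_apply]
  | add p q hp hq => simp_all [Module.End.mul_apply, map_add]
  | mul_X p k ih =>
      simp only [opD, Module.End.mul_apply, LinearMap.coe_mk] at *
      show pderiv i (pderiv j (p * X k)) = pderiv j (pderiv i (p * X k))
      have ihx : pderiv i (pderiv j p) = pderiv j (pderiv i p) := ih
      simp only [pderiv_mul, map_add, pderiv_mul, map_mul, pderiv_X', ihx]
      split_ifs <;> simp <;> ring
  
lemma opD_opX (i j : Fin n) :
    opD n i * opX n j = opX n j * opD n i + if i = j then 1 else 0 := by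
  apply LinearMap.ext
  intro f
  simp only [LinearMap.add_apply, Module.End.mul_apply, opX_apply, opD_apply, pderiv_mul,
    pderiv_X']
  split_ifs <;> simp [mul_comm] <;> ring

noncomputable def gmap (n : ℕ) (lam₀ : ℂ) : (Fin n ⊕ Fin n) ⊕ Unit → EndP n
  | Sum.inl (Sum.inl i) => opX n i
  | Sum.inl (Sum.inr i) => lam₀ • opD n i
  | Sum.inr _ => lam₀ • 1

lemma gmap_rel (lam₀ : ℂ) ⦃a b : FreeAlgebra ℂ ((Fin n ⊕ Fin n) ⊕ Unit)⦄
    (h : WeylRel n a b) :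
    FreeAlgebra.lift ℂ (gmap n lam₀) a = FreeAlgebra.lift ℂ (gmap n lam₀) b := by
  induction h with
  | xx i j => simp [fwX, gmap, opX_comm]
  | pp i j =>
      simp only [fwP, map_mul, FreeAlgebra.lift_ι_apply, gmap]
      rw [smul_mul_smul_comm, smul_mul_smul_comm, opD_comm]
  | lx i => simp [fwX, fwL, gmap, smul_mul_assoc, mul_smul_comm]
  | lp i => simp [fwP, fwL, gmap, smul_mul_assoc, mul_smul_comm]
  | px_same i =>
      simp only [fwP, fwX, fwL, map_mul, map_add, FreeAlgebra.lift_ι_apply, gmap,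
        smul_mul_assoc, mul_smul_comm]
      rw [opD_opX]
      simp [smul_add]
  | px_ne i j hij =>
      simp only [fwP, fwX, map_mul, FreeAlgebra.lift_ι_apply, gmap,
        smul_mul_assoc, mul_smul_comm]
      rw [opD_opX, if_neg hij, add_zero]

noncomputable def rho (n : ℕ) (lam₀ : ℂ) : HWeyl n →ₐ[ℂ] EndP n :=
  RingQuot.liftAlgHom ℂ ⟨FreeAlgebra.lift ℂ (gmap n lam₀), gmap_rel lam₀⟩

lemma rho_mk (lam₀ : ℂ) (f : FreeAlgebra ℂ ((Fin n ⊕ Fin n) ⊕ Unit)) :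
    rho n lam₀ (RingQuot.mkAlgHom ℂ (WeylRel n) f) = FreeAlgebra.lift ℂ (gmap n lam₀) f := by
  rw [rho, RingQuot.liftAlgHom_mkAlgHom_apply]

lemma rho_hx (lam₀ : ℂ) (i : Fin n) : rho n lam₀ (hx n i) = opX n i := by
  rw [hx, rho_mk]; simp [fwX, gmap]

lemma rho_hp (lam₀ : ℂ) (i : Fin n) : rho n lam₀ (hp n i) = lam₀ • opD n i := by
  rw [hp, rho_mk]; simp [fwP, gmap]

lemma rho_hl (lam₀ : ℂ) : rho n lam₀ (hl n) = lam₀ • 1 := by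
  rw [hl, rho_mk]; simp [fwL, gmap]
section Hlemmas
variable {n : ℕ}

lemma hx_comm (i j : Fin n) : hx n i * hx n j = hx n j * hx n i := by
  have := RingQuot.mkAlgHom_rel ℂ (WeylRel.xx i j)
  simpa [hx, map_mul] using this

lemma hp_comm (i j : Fin n) : hp n i * hp n j = hp n j * hp n i := by
  have := RingQuot.mkAlgHom_rel ℂ (WeylRel.pp i j)
  simpa [hp, map_mul] using this

lemma hl_hx (i : Fin n) : hl n * hx n i = hx n i * hl n := by
  have := RingQuot.mkAlgHom_rel ℂ (WeylRel.lx i)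
  simpa [hx, hl, map_mul] using this

lemma hl_hp (i : Fin n) : hl n * hp n i = hp n i * hl n := by
  have := RingQuot.mkAlgHom_rel ℂ (WeylRel.lp i)
  simpa [hp, hl, map_mul] using this

lemma hp_hx (i j : Fin n) :
    hp n i * hx n j = hx n j * hp n i + if i = j then hl n else 0 := by
  split_ifs with h
  · subst h
    have := RingQuot.mkAlgHom_rel ℂ (WeylRel.px_same i)
    simpa [hx, hp, hl, map_mul, map_add] using this
  · have := RingQuot.mkAlgHom_rel ℂ (WeylRel.px_ne i j h)
    simpa [hx, hp, map_mul] using this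

/-- `x`-monomial -/
noncomputable def mX (n : ℕ) (a : Fin n →₀ ℕ) : HWeyl n :=
  ((List.finRange n).map (fun i => hx n i ^ a i)).prod

/-- `p`-monomial -/
noncomputable def mP (n : ℕ) (b : Fin n →₀ ℕ) : HWeyl n :=
  ((List.finRange n).map (fun i => hp n i ^ b i)).prod

lemma mX_zero : mX n 0 = 1 := by
  simp [mX]

lemma mP_zero : mP n 0 = 1 := by
  simp [mP]

lemma commute_hl_hx (i : Fin n) : Commute (hl n) (hx n i) := hl_hx i
lemma commute_hl_hp (i : Fin n) : Commute (hl n) (hp n i) := hl_hp i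

lemma commute_hl_mX (a : Fin n →₀ ℕ) : Commute (hl n) (mX n a) := by
  apply Commute.list_prod_right
  intro y hy
  simp only [List.mem_map] at hy
  obtain ⟨i, -, rfl⟩ := hy
  exact (commute_hl_hx i).pow_right _

lemma commute_hl_mP (b : Fin n →₀ ℕ) : Commute (hl n) (mP n b) := by
  apply Commute.list_prod_right
  intro y hy
  simp only [List.mem_map] at hy
  obtain ⟨i, -, rfl⟩ := hy
  exact (commute_hl_hp i).pow_right _

private lemma mul_prod_pow (ff : Fin n → HWeyl n)
    (hcomm : ∀ i j : Fin n, Commute (ff i) (ff j))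
    (a a' : Fin n →₀ ℕ) (j : Fin n) (ha' : a' = a + Finsupp.single j 1) :
    ∀ l : List (Fin n), l.Nodup → j ∈ l →
      ff j * (l.map (fun i => ff i ^ a i)).prod = (l.map (fun i => ff i ^ a' i)).prod := by
  have haj : a' j = a j + 1 := by simp [ha']
  have hane : ∀ i : Fin n, i ≠ j → a' i = a i := by
    intro i hi
    rw [ha', Finsupp.add_apply, Finsupp.single_apply, if_neg (Ne.symm hi), add_zero]
  intro l
  induction l with
  | nil => simp
  | cons i t ih =>
      intro hnd hmem
      rcases List.mem_cons.1 hmem with h | h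
      · subst h
        have hjt : j ∉ t := (List.nodup_cons.1 hnd).1
        have hmapeq : t.map (fun i => ff i ^ a' i) = t.map (fun i => ff i ^ a i) := by
          apply List.map_congr_left
          intro i hi
          rw [hane i (fun hh => hjt (hh ▸ hi))]
        rw [List.map_cons, List.map_cons, List.prod_cons, List.prod_cons, hmapeq,
          ← mul_assoc, ← pow_succ', haj]
      · have hnd' := (List.nodup_cons.1 hnd).2
        have hij : i ≠ j := fun hh => (List.nodup_cons.1 hnd).1 (hh ▸ h)
        rw [List.map_cons, List.map_cons, List.prod_cons, List.prod_cons, ← mul_assoc,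
          ((hcomm j i).pow_right (a i)).eq, mul_assoc, ih hnd' h, hane i hij]

lemma hx_mul_mX (j : Fin n) (a : Fin n →₀ ℕ) :
    hx n j * mX n a = mX n (a + Finsupp.single j 1) := by
  exact mul_prod_pow (hx n) hx_comm a _ j rfl (List.finRange n)
    (List.nodup_finRange n) (List.mem_finRange j)

lemma hp_mul_mP (j : Fin n) (b : Fin n →₀ ℕ) :
    hp n j * mP n b = mP n (b + Finsupp.single j 1) := by
  exact mul_prod_pow (hp n) hp_comm b _ j rfl (List.finRange n)
    (List.nodup_finRange n) (List.mem_finRange j)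

lemma commute_hp_mP (j : Fin n) (b : Fin n →₀ ℕ) : Commute (hp n j) (mP n b) := by
  apply Commute.list_prod_right
  intro y hy
  simp only [List.mem_map] at hy
  obtain ⟨i, -, rfl⟩ := hy
  exact (show Commute (hp n j) (hp n i) from hp_comm j i).pow_right _

lemma mP_mul_hp (j : Fin n) (b : Fin n →₀ ℕ) :
    mP n b * hp n j = mP n (b + Finsupp.single j 1) := by
  rw [← (commute_hp_mP j b).eq, hp_mul_mP]

lemma mX_single (i : Fin n) : mX n (Finsupp.single i 1) = hx n i := by
  have := hx_mul_mX i 0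
  rw [mX_zero, mul_one, zero_add] at this
  exact this.symm

lemma mP_single (i : Fin n) : mP n (Finsupp.single i 1) = hp n i := by
  have := hp_mul_mP i 0
  rw [mP_zero, mul_one, zero_add] at this
  exact this.symm

end Hlemmas
section DegInduction
variable {n : ℕ}

private def fdeg (a : Fin n →₀ ℕ) : ℕ := a.sum fun _ k => k

private lemma fdeg_add (a b : Fin n →₀ ℕ) : fdeg (a + b) = fdeg a + fdeg b := by
  unfold fdeg
  apply Finsupp.sum_add_index <;> simp

private lemma fdeg_single (j : Fin n) : fdeg (Finsupp.single j 1) = 1 := by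
  unfold fdeg
  simp

lemma finsupp_single_induction (p : (Fin n →₀ ℕ) → Prop) (h0 : p 0)
    (hs : ∀ (a : Fin n →₀ ℕ) (j : Fin n), p a → p (a + Finsupp.single j 1)) :
    ∀ a, p a := by
  have key : ∀ (m : ℕ) (a : Fin n →₀ ℕ), fdeg a = m → p a := by
    intro m
    induction m with
    | zero =>
        intro a ha
        have : a = 0 := by
          ext i
          by_contra hi
          have hisupp : i ∈ a.support := Finsupp.mem_support_iff.2 (by simpa using hi)
          have : 0 < fdeg a := by
            unfold fdeg Finsupp.sum
            exact Finset.sum_pos' (fun _ _ => Nat.zero_le _)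
              ⟨i, hisupp, Nat.pos_of_ne_zero (by simpa using hi)⟩
          omega
        rwa [this]
    | succ m ih =>
        intro a ha
        have hne : a ≠ 0 := by
          rintro rfl
          simp [fdeg] at ha
        obtain ⟨j, hj⟩ : ∃ j, a j ≠ 0 := by
          by_contra hc
          push_neg at hc
          exact hne (Finsupp.ext fun i => by simpa using hc i)
        set c : Fin n →₀ ℕ := a - Finsupp.single j 1 with hc
        have hj' : 1 ≤ a j := Nat.one_le_iff_ne_zero.2 hj
        have hac : a = c + Finsupp.single j 1 := by
          ext i
          simp only [hc, Finsupp.add_apply, Finsupp.tsub_apply, Finsupp.single_apply]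
          split_ifs with h
          · rw [← h]; omega
          · omega
        have hdc : fdeg c = m := by
          have := fdeg_add c (Finsupp.single j 1)
          rw [← hac, ha, fdeg_single] at this
          omega
        rw [hac]
        exact hs c j (ih c hdc)
  intro a
  exact key (fdeg a) a rfl
end DegInduction
section SpanTop
variable {n : ℕ}

/-- The span of normal-form monomials `x^a p^b ƛ^c`. -/
noncomputable def Wspan (n : ℕ) : Submodule ℂ (HWeyl n) :=
  Submodule.span ℂ (Set.range fun t : (Fin n →₀ ℕ) × (Fin n →₀ ℕ) × ℕ =>
    mX n t.1 * mP n t.2.1 * hl n ^ t.2.2)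

lemma mono_mem (a b : Fin n →₀ ℕ) (c : ℕ) : mX n a * mP n b * hl n ^ c ∈ Wspan n :=
  Submodule.subset_span ⟨(a, b, c), rfl⟩

lemma one_mem_W : (1 : HWeyl n) ∈ Wspan n := by
  have := mono_mem (0 : Fin n →₀ ℕ) 0 0
  rwa [mX_zero, mP_zero, pow_zero, mul_one, mul_one] at this

private lemma mulLeft_mem (y : HWeyl n)
    (hmono : ∀ (a b : Fin n →₀ ℕ) (c : ℕ), y * (mX n a * mP n b * hl n ^ c) ∈ Wspan n) :
    ∀ w ∈ Wspan n, y * w ∈ Wspan n := by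
  intro w hw
  induction hw using Submodule.span_induction with
  | mem w hwmem => obtain ⟨⟨a, b, c⟩, rfl⟩ := hwmem; exact hmono a b c
  | zero => rw [mul_zero]; exact Submodule.zero_mem _
  | add u v _ _ hu hv => rw [mul_add]; exact Submodule.add_mem _ hu hv
  | smul r u _ hu => rw [mul_smul_comm]; exact Submodule.smul_mem _ r hu

lemma Wx (j : Fin n) : ∀ w ∈ Wspan n, hx n j * w ∈ Wspan n := by
  apply mulLeft_mem
  intro a b c
  simp only [← mul_assoc]
  rw [hx_mul_mX]
  exact mono_mem _ _ _

lemma Wl : ∀ w ∈ Wspan n, hl n * w ∈ Wspan n := by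
  apply mulLeft_mem
  intro a b c
  simp only [← mul_assoc]
  rw [(commute_hl_mX a).eq, mul_assoc (mX n a) (hl n) (mP n b), (commute_hl_mP b).eq,
    ← mul_assoc, mul_assoc (mX n a * mP n b) (hl n) (hl n ^ c), ← pow_succ']
  exact mono_mem _ _ _

/-- auxiliary span: `x^a ƛ` -/
noncomputable def Ux (n : ℕ) : Submodule ℂ (HWeyl n) :=
  Submodule.span ℂ (Set.range fun a : Fin n →₀ ℕ => mX n a * hl n)

lemma Ux_hx (j : Fin n) : ∀ u ∈ Ux n, hx n j * u ∈ Ux n := by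
  intro u hu
  induction hu using Submodule.span_induction with
  | mem u humem =>
      obtain ⟨a, rfl⟩ := humem
      rw [← mul_assoc, hx_mul_mX]
      exact Submodule.subset_span ⟨_, rfl⟩
  | zero => rw [mul_zero]; exact Submodule.zero_mem _
  | add u v _ _ hu hv => rw [mul_add]; exact Submodule.add_mem _ hu hv
  | smul r u _ hu => rw [mul_smul_comm]; exact Submodule.smul_mem _ r hu

lemma hp_mX_comm (i : Fin n) (a : Fin n →₀ ℕ) :
    ∃ u ∈ Ux n, hp n i * mX n a = mX n a * hp n i + u := by
  induction a using finsupp_single_induction with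
  | h0 => exact ⟨0, Submodule.zero_mem _, by rw [mX_zero, one_mul, mul_one, add_zero]⟩
  | hs a j ih =>
      obtain ⟨u, hu, heq⟩ := ih
      refine ⟨hx n j * u + (if i = j then 1 else 0 : ℂ) • (mX n a * hl n), ?_, ?_⟩
      · exact Submodule.add_mem _ (Ux_hx j u hu)
          (Submodule.smul_mem _ _ (Submodule.subset_span ⟨a, rfl⟩))
      · rw [← hx_mul_mX, ← mul_assoc, hp_hx]
        rw [add_mul, mul_assoc, heq, mul_add, ← mul_assoc, hx_mul_mX]
        split_ifs with h
        · rw [one_smul, (commute_hl_mX a).eq, add_assoc]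
        · rw [zero_smul, add_zero, zero_mul, add_zero]

lemma Ux_mul_mem (b : Fin n →₀ ℕ) (c : ℕ) :
    ∀ u ∈ Ux n, u * (mP n b * hl n ^ c) ∈ Wspan n := by
  intro u hu
  induction hu using Submodule.span_induction with
  | mem u humem =>
      obtain ⟨a, rfl⟩ := humem
      have : mX n a * hl n * (mP n b * hl n ^ c) = mX n a * mP n b * hl n ^ (c + 1) := by
        rw [mul_assoc, ← mul_assoc (hl n) (mP n b), (commute_hl_mP b).eq,
          mul_assoc (mP n b), ← pow_succ', ← mul_assoc]
      rw [this]
      exact mono_mem _ _ _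
  | zero => rw [zero_mul]; exact Submodule.zero_mem _
  | add u v _ _ hu hv => rw [add_mul]; exact Submodule.add_mem _ hu hv
  | smul r u _ hu => rw [smul_mul_assoc]; exact Submodule.smul_mem _ r hu

lemma Wp (i : Fin n) : ∀ w ∈ Wspan n, hp n i * w ∈ Wspan n := by
  apply mulLeft_mem
  intro a b c
  obtain ⟨u, hu, heq⟩ := hp_mX_comm i a
  rw [← mul_assoc, ← mul_assoc, heq, add_mul, add_mul,
    mul_assoc (mX n a) (hp n i) (mP n b), hp_mul_mP]
  apply Submodule.add_mem
  · exact mono_mem _ _ _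
  · rw [mul_assoc]
    exact Ux_mul_mem b c u hu

lemma Wlpow (c : ℕ) : ∀ w ∈ Wspan n, hl n ^ c * w ∈ Wspan n := by
  induction c with
  | zero => intro w hw; rwa [pow_zero, one_mul]
  | succ c ih =>
      intro w hw
      rw [pow_succ', mul_assoc]
      exact Wl _ (ih w hw)

lemma WmP (b : Fin n →₀ ℕ) : ∀ w ∈ Wspan n, mP n b * w ∈ Wspan n := by
  induction b using finsupp_single_induction with
  | h0 => intro w hw; rwa [mP_zero, one_mul]
  | hs b i ih =>
      intro w hw
      rw [← hp_mul_mP, mul_assoc]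
      exact Wp i _ (ih w hw)

lemma WmX (a : Fin n →₀ ℕ) : ∀ w ∈ Wspan n, mX n a * w ∈ Wspan n := by
  induction a using finsupp_single_induction with
  | h0 => intro w hw; rwa [mX_zero, one_mul]
  | hs a j ih =>
      intro w hw
      rw [← hx_mul_mX, mul_assoc]
      exact Wx j _ (ih w hw)

lemma Wmul : ∀ u ∈ Wspan n, ∀ v ∈ Wspan n, u * v ∈ Wspan n := by
  intro u hu
  induction hu using Submodule.span_induction with
  | mem u humem =>
      obtain ⟨⟨a, b, c⟩, rfl⟩ := humem
      intro v hv
      rw [mul_assoc, mul_assoc]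
      exact WmX a _ (WmP b _ (Wlpow c v hv))
  | zero => intro v hv; rw [zero_mul]; exact Submodule.zero_mem _
  | add u u' _ _ hu hu' => intro v hv; rw [add_mul]; exact Submodule.add_mem _ (hu v hv) (hu' v hv)
  | smul r u _ hu => intro v hv; rw [smul_mul_assoc]; exact Submodule.smul_mem _ r (hu v hv)

lemma W_top : ∀ h : HWeyl n, h ∈ Wspan n := by
  intro h
  obtain ⟨f, rfl⟩ := RingQuot.mkAlgHom_surjective ℂ (WeylRel n) h
  induction f using FreeAlgebra.induction with
  | grade0 r =>
      rw [AlgHom.commutes, Algebra.algebraMap_eq_smul_one]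
      exact Submodule.smul_mem _ r one_mem_W
  | grade1 m =>
      rcases m with (i | i) | u
      · show hx n i ∈ Wspan n
        have : hx n i = mX n (Finsupp.single i 1) * mP n 0 * hl n ^ 0 := by
          rw [mX_single, mP_zero, pow_zero, mul_one, mul_one]
        rw [this]; exact mono_mem _ _ _
      · show hp n i ∈ Wspan n
        have : hp n i = mX n 0 * mP n (Finsupp.single i 1) * hl n ^ 0 := by
          rw [mX_zero, mP_single, pow_zero, one_mul, mul_one]
        rw [this]; exact mono_mem _ _ _
      · show hl n ∈ Wspan n
        have : hl n = mX n 0 * mP n 0 * hl n ^ 1 := by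
          rw [mX_zero, mP_zero, pow_one, one_mul, one_mul]
        rw [this]; exact mono_mem _ _ _
  | mul f g hf hg => rw [map_mul]; exact Wmul _ hf _ hg
  | add f g hf hg => rw [map_add]; exact Submodule.add_mem _ hf hg

end SpanTop
section Ideal
variable {n : ℕ}

/-- The two-sided ideal `(ƛ - λ₀)`. -/
noncomputable def Ilam (n : ℕ) (lam₀ : ℂ) : TwoSidedIdeal (HWeyl n) :=
  TwoSidedIdeal.span {hl n - algebraMap ℂ (HWeyl n) lam₀}

lemma gen_mem_Ilam (lam₀ : ℂ) : hl n - algebraMap ℂ (HWeyl n) lam₀ ∈ Ilam n lam₀ :=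
  TwoSidedIdeal.subset_span rfl

lemma hl_pow_sub_mem (lam₀ : ℂ) (c : ℕ) :
    hl n ^ c - algebraMap ℂ (HWeyl n) (lam₀ ^ c) ∈ Ilam n lam₀ := by
  induction c with
  | zero => simp only [pow_zero, map_one, sub_self]; exact TwoSidedIdeal.zero_mem _
  | succ c ih =>
      have key : hl n ^ (c + 1) - algebraMap ℂ (HWeyl n) (lam₀ ^ (c + 1))
          = hl n * (hl n ^ c - algebraMap ℂ (HWeyl n) (lam₀ ^ c))
            + (hl n - algebraMap ℂ (HWeyl n) lam₀) * algebraMap ℂ (HWeyl n) (lam₀ ^ c) := by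
        rw [mul_sub, sub_mul, ← pow_succ', ← map_mul, ← pow_succ']
        rw [sub_add_sub_cancel]
      rw [key]
      exact TwoSidedIdeal.add_mem _ (TwoSidedIdeal.mul_mem_left _ _ _ ih)
        (TwoSidedIdeal.mul_mem_right _ _ _ (gen_mem_Ilam lam₀))

/-- `Ilam` as a `ℂ`-submodule. -/
noncomputable def Jlam (n : ℕ) (lam₀ : ℂ) : Submodule ℂ (HWeyl n) where
  carrier := Ilam n lam₀
  add_mem' := fun ha hb => TwoSidedIdeal.add_mem _ ha hb
  zero_mem' := TwoSidedIdeal.zero_mem _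
  smul_mem' := fun r v hv => by
    rw [Algebra.smul_def]
    exact TwoSidedIdeal.mul_mem_left _ _ _ hv

/-- The span of `x^a p^b`. -/
noncomputable def W2span (n : ℕ) : Submodule ℂ (HWeyl n) :=
  Submodule.span ℂ (Set.range fun ab : (Fin n →₀ ℕ) × (Fin n →₀ ℕ) =>
    mX n ab.1 * mP n ab.2)

lemma decomp (lam₀ : ℂ) (h : HWeyl n) : h ∈ W2span n ⊔ Jlam n lam₀ := by
  have hW : Wspan n ≤ W2span n ⊔ Jlam n lam₀ := by
    rw [Wspan, Submodule.span_le]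
    rintro - ⟨⟨a, b, c⟩, rfl⟩
    simp only
    have key : mX n a * mP n b * hl n ^ c
        = lam₀ ^ c • (mX n a * mP n b)
          + (mX n a * mP n b) * (hl n ^ c - algebraMap ℂ (HWeyl n) (lam₀ ^ c)) := by
      rw [mul_sub, ← Algebra.commutes (lam₀ ^ c) (mX n a * mP n b), ← Algebra.smul_def]
      abel
    rw [key]
    apply Submodule.add_mem
    · exact Submodule.mem_sup_left (Submodule.smul_mem _ _
        (Submodule.subset_span ⟨(a, b), rfl⟩))
    · exact Submodule.mem_sup_right
        (TwoSidedIdeal.mul_mem_left _ _ _ (hl_pow_sub_mem lam₀ c))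
  exact hW (W_top h)

lemma Ilam_sub_ker (lam₀ : ℂ) : ∀ v ∈ Ilam n lam₀, rho n lam₀ v = 0 := by
  intro v hv
  have hsub : ({hl n - algebraMap ℂ (HWeyl n) lam₀} : Set (HWeyl n))
      ⊆ TwoSidedIdeal.ker (rho n lam₀) := by
    intro y hy
    rw [Set.mem_singleton_iff] at hy
    subst hy
    rw [SetLike.mem_coe, TwoSidedIdeal.mem_ker _]
    rw [map_sub, rho_hl, AlgHom.commutes, Algebra.algebraMap_eq_smul_one, sub_self]
  exact (TwoSidedIdeal.mem_ker _).1 (TwoSidedIdeal.mem_span_iff.1 hv _ hsub)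

end Ideal
section Eval
open MvPolynomial
variable {n : ℕ}

lemma rho_mX_apply (lam₀ : ℂ) (a : Fin n →₀ ℕ) (q : MvPolynomial (Fin n) ℂ) :
    rho n lam₀ (mX n a) q = monomial a 1 * q := by
  induction a using finsupp_single_induction generalizing q with
  | h0 => rw [mX_zero, map_one, Module.End.one_apply, monomial_zero', C_1, one_mul]
  | hs a j ih =>
      rw [← hx_mul_mX, map_mul, Module.End.mul_apply, ih, rho_hx, opX_apply,
        ← mul_assoc]
      congr 1
      rw [X, monomial_mul, one_mul, add_comm]

private lemma nat_mul_descFactorial_pred (m k : ℕ) :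
    m * (m - 1).descFactorial k = m.descFactorial (k + 1) := by
  cases m with
  | zero => rw [Nat.zero_descFactorial_succ, Nat.zero_mul]
  | succ m' => rw [Nat.succ_descFactorial_succ, Nat.succ_sub_one]

lemma rho_mP_apply (lam₀ : ℂ) (b : Fin n →₀ ℕ) (s : Fin n →₀ ℕ) (coef : ℂ) :
    rho n lam₀ (mP n b) (monomial s coef)
      = monomial (s - b) (coef * lam₀ ^ fdeg b
          * ∏ i : Fin n, ((s i).descFactorial (b i) : ℂ)) := by
  induction b using finsupp_single_induction generalizing s coef with
  | h0 =>
      rw [mP_zero, map_one, Module.End.one_apply]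
      simp [fdeg]
  | hs b j ih =>
      rw [← mP_mul_hp, map_mul, Module.End.mul_apply, rho_hp, LinearMap.smul_apply,
        opD_apply, pderiv_monomial, map_smul, ih]
      rw [smul_monomial]
      set s' : Fin n →₀ ℕ := s - Finsupp.single j 1 with hs'
      set b' : Fin n →₀ ℕ := b + Finsupp.single j 1 with hb'
      have hs'j : s' j = s j - 1 := by
        rw [hs', Finsupp.tsub_apply, Finsupp.single_apply, if_pos rfl]
      have hs'ne : ∀ i : Fin n, i ≠ j → s' i = s i := by
        intro i hij
        rw [hs', Finsupp.tsub_apply, Finsupp.single_apply, if_neg (Ne.symm hij), Nat.sub_zero]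
      have hb'j : b' j = b j + 1 := by
        rw [hb', Finsupp.add_apply, Finsupp.single_apply, if_pos rfl]
      have hb'ne : ∀ i : Fin n, i ≠ j → b' i = b i := by
        intro i hij
        rw [hb', Finsupp.add_apply, Finsupp.single_apply, if_neg (Ne.symm hij), Nat.add_zero]
      congr 1
      · rw [hs', hb', tsub_tsub, add_comm (Finsupp.single j 1) b]
      · -- coefficient identity
        have hdeg : fdeg b' = fdeg b + 1 := by
          rw [hb', fdeg_add, fdeg_single]
        have hprod1 : (∏ i : Fin n, ((s' i).descFactorial (b i) : ℂ))
            = ((s j - 1).descFactorial (b j) : ℂ)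
              * ∏ i ∈ Finset.univ.erase j, ((s i).descFactorial (b i) : ℂ) := by
          rw [← Finset.mul_prod_erase Finset.univ _ (Finset.mem_univ j), hs'j]
          congr 1
          apply Finset.prod_congr rfl
          intro i hi
          rw [hs'ne i (Finset.mem_erase.1 hi).1]
        have hprod2 : (∏ i : Fin n, ((s i).descFactorial (b' i) : ℂ))
            = ((s j).descFactorial (b j + 1) : ℂ)
              * ∏ i ∈ Finset.univ.erase j, ((s i).descFactorial (b i) : ℂ) := by
          rw [← Finset.mul_prod_erase Finset.univ _ (Finset.mem_univ j), hb'j]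
          congr 1
          apply Finset.prod_congr rfl
          intro i hi
          rw [hb'ne i (Finset.mem_erase.1 hi).1]
        rw [hprod1, hprod2, hdeg]
        have hnat : ((s j : ℂ)) * ((s j - 1).descFactorial (b j) : ℂ)
            = ((s j).descFactorial (b j + 1) : ℂ) := by
          rw [← Nat.cast_mul, nat_mul_descFactorial_pred]
        rw [pow_succ, smul_eq_mul]
        calc lam₀ * (coef * (s j : ℂ) * lam₀ ^ fdeg b
              * (((s j - 1).descFactorial (b j) : ℂ)
                * ∏ i ∈ Finset.univ.erase j, ((s i).descFactorial (b i) : ℂ)))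
            = coef * (lam₀ ^ fdeg b * lam₀)
              * (((s j : ℂ)) * ((s j - 1).descFactorial (b j) : ℂ)
                * ∏ i ∈ Finset.univ.erase j, ((s i).descFactorial (b i) : ℂ)) := by ring
          _ = _ := by rw [hnat]

end Eval
section Indep
open MvPolynomial
variable {n : ℕ}

private lemma fdeg_eq_sum (b : Fin n →₀ ℕ) : fdeg b = ∑ i : Fin n, b i := by
  unfold fdeg
  exact Finsupp.sum_fintype _ _ (fun _ => rfl)

lemma rho_mono_apply (lam₀ : ℂ) (a b s : Fin n →₀ ℕ) :
    rho n lam₀ (mX n a * mP n b) (monomial s 1)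
      = monomial (a + (s - b)) (lam₀ ^ fdeg b
          * ∏ i : Fin n, ((s i).descFactorial (b i) : ℂ)) := by
  rw [map_mul, Module.End.mul_apply, rho_mP_apply, rho_mX_apply, monomial_mul, one_mul, one_mul]

lemma indep (lam₀ : ℂ) (hlam₀ : lam₀ ≠ 0) (d : ((Fin n →₀ ℕ) × (Fin n →₀ ℕ)) →₀ ℂ)
    (h0 : rho n lam₀ (d.sum fun ab r => r • (mX n ab.1 * mP n ab.2)) = 0) :
    d = 0 := by
  by_contra hne
  have hsupp : d.support.Nonempty := Finsupp.support_nonempty_iff.2 hne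
  have hBne : (d.support.image Prod.snd).Nonempty := hsupp.image _
  obtain ⟨b₀, hb₀B, hmin⟩ := Finset.exists_min_image (d.support.image Prod.snd) fdeg hBne
  obtain ⟨ab₀, hab₀, hsnd⟩ := Finset.mem_image.1 hb₀B
  obtain ⟨a₀, b₀'⟩ := ab₀
  cases hsnd
  -- evaluate at monomial b₀' 1
  have heval : (0 : MvPolynomial (Fin n) ℂ)
      = ∑ ab ∈ d.support, d ab • (rho n lam₀ (mX n ab.1 * mP n ab.2) (monomial b₀' 1)) := by
    have h1 : rho n lam₀ (d.sum fun ab r => r • (mX n ab.1 * mP n ab.2))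
        = ∑ ab ∈ d.support, d ab • rho n lam₀ (mX n ab.1 * mP n ab.2) := by
      rw [map_finsuppSum]
      rw [Finsupp.sum]
      apply Finset.sum_congr rfl
      intro ab _
      rw [map_smul]
    rw [h1] at h0
    have := congrArg (fun F : EndP n => F (monomial b₀' 1)) h0
    simp only [LinearMap.sum_apply, LinearMap.smul_apply, LinearMap.zero_apply] at this
    exact this.symm
  -- compute the coefficient at a₀
  have hcoeff := congrArg (MvPolynomial.coeff a₀) heval
  rw [MvPolynomial.coeff_zero, MvPolynomial.coeff_sum] at hcoeff
  have hzero : ∀ ab ∈ d.support, ab ≠ (a₀, b₀') →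
      MvPolynomial.coeff a₀ (d ab • (rho n lam₀ (mX n ab.1 * mP n ab.2) (monomial b₀' 1))) = 0 := by
    intro ab habsupp habne
    rw [rho_mono_apply]
    by_cases hb : ab.2 = b₀'
    · have hane : ab.1 ≠ a₀ := by
        intro ha
        exact habne (Prod.ext ha hb)
      rw [hb, tsub_self, add_zero, MvPolynomial.coeff_smul, MvPolynomial.coeff_monomial,
        if_neg hane, smul_zero]
    · have hmem : ab.2 ∈ d.support.image Prod.snd := Finset.mem_image_of_mem _ habsupp
      have hge : fdeg b₀' ≤ fdeg ab.2 := hmin _ hmem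
      have hex : ∃ i, b₀' i < ab.2 i := by
        by_contra hc
        push_neg at hc
        have hlt : fdeg ab.2 < fdeg b₀' := by
          rw [fdeg_eq_sum, fdeg_eq_sum]
          apply Finset.sum_lt_sum (fun i _ => hc i)
          obtain ⟨i, hi⟩ : ∃ i, ab.2 i ≠ b₀' i := by
            by_contra hc2
            push_neg at hc2
            exact hb (Finsupp.ext hc2)
          exact ⟨i, Finset.mem_univ i, lt_of_le_of_ne (hc i) hi⟩
        omega
      obtain ⟨i, hi⟩ := hex
      have : ((b₀' i).descFactorial (ab.2 i) : ℂ) = 0 := by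
        rw [Nat.descFactorial_eq_zero_iff_lt.2 hi, Nat.cast_zero]
      rw [Finset.prod_eq_zero (Finset.mem_univ i) this, mul_zero, monomial_zero,
        smul_zero, MvPolynomial.coeff_zero]
  rw [Finset.sum_eq_single_of_mem (a₀, b₀') hab₀ hzero, rho_mono_apply, tsub_self, add_zero,
    MvPolynomial.coeff_smul, MvPolynomial.coeff_monomial, if_pos rfl, smul_eq_mul] at hcoeff
  have hCne : lam₀ ^ fdeg b₀' * (∏ i : Fin n, ((b₀' i).descFactorial (b₀' i) : ℂ)) ≠ 0 := by
    apply mul_ne_zero (pow_ne_zero _ hlam₀)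
    apply Finset.prod_ne_zero_iff.2
    intro i _
    rw [Nat.descFactorial_self]
    exact_mod_cast Nat.factorial_ne_zero _
  have : d (a₀, b₀') = 0 := by
    rcases mul_eq_zero.1 hcoeff.symm with h | h
    · exact h
    · exact absurd h hCne
  exact (Finsupp.mem_support_iff.1 hab₀) this

end Indep
section Final
open MvPolynomial
variable {n : ℕ}

lemma ker_iff (lam₀ : ℂ) (hlam₀ : lam₀ ≠ 0) (h : HWeyl n) :
    rho n lam₀ h = 0 ↔ h ∈ Ilam n lam₀ := by
  constructor
  · intro hker
    obtain ⟨w, hw, v, hv, rfl⟩ := Submodule.mem_sup.1 (decomp lam₀ h)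
    have hv' : rho n lam₀ v = 0 := Ilam_sub_ker lam₀ v hv
    have hw' : rho n lam₀ w = 0 := by
      rw [map_add, hv', add_zero] at hker
      exact hker
    obtain ⟨d, rfl⟩ := Finsupp.mem_span_range_iff_exists_finsupp.1 hw
    have hd0 : d = 0 := indep lam₀ hlam₀ d hw'
    rw [hd0, Finsupp.sum_zero_index, zero_add]
    exact hv
  · intro hmem
    exact Ilam_sub_ker lam₀ h hmem

lemma mem_weyl (lam₀ : ℂ) (f : FreeAlgebra ℂ ((Fin n ⊕ Fin n) ⊕ Unit)) :
    rho n lam₀ (RingQuot.mkAlgHom ℂ (WeylRel n) f) ∈ WeylAlgebra n := by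
  induction f using FreeAlgebra.induction with
  | grade0 r => rw [AlgHom.commutes, AlgHom.commutes]; exact Subalgebra.algebraMap_mem _ r
  | grade1 m =>
      rcases m with (i | i) | u
      · have h1 : RingQuot.mkAlgHom ℂ (WeylRel n) (FreeAlgebra.ι ℂ (Sum.inl (Sum.inl i)))
            = hx n i := rfl
        rw [h1, rho_hx]
        rw [WeylAlgebra]
        exact Algebra.subset_adjoin (Set.mem_union_left _ (Set.mem_range_self i))
      · have h1 : RingQuot.mkAlgHom ℂ (WeylRel n) (FreeAlgebra.ι ℂ (Sum.inl (Sum.inr i)))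
            = hp n i := rfl
        rw [h1, rho_hp]
        rw [WeylAlgebra]
        exact Subalgebra.smul_mem _
          (Algebra.subset_adjoin (Set.mem_union_right _ (Set.mem_range_self i))) _
      · have h1 : RingQuot.mkAlgHom ℂ (WeylRel n) (FreeAlgebra.ι ℂ (Sum.inr u))
            = hl n := rfl
        rw [h1, rho_hl]
        exact Subalgebra.smul_mem _ (Subalgebra.one_mem _) _
  | mul f g hf hg => rw [map_mul, map_mul]; exact Subalgebra.mul_mem _ hf hg
  | add f g hf hg => rw [map_add, map_add]; exact Subalgebra.add_mem _ hf hg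

lemma range_eq (lam₀ : ℂ) (hlam₀ : lam₀ ≠ 0) :
    (rho n lam₀).range = WeylAlgebra n := by
  apply le_antisymm
  · intro y hy
    obtain ⟨h, rfl⟩ := (AlgHom.mem_range _).1 hy
    obtain ⟨f, rfl⟩ := RingQuot.mkAlgHom_surjective ℂ (WeylRel n) h
    exact mem_weyl lam₀ f
  · rw [WeylAlgebra]
    apply Algebra.adjoin_le
    rintro y (⟨i, rfl⟩ | ⟨i, rfl⟩)
    · exact (AlgHom.mem_range _).2 ⟨hx n i, rho_hx lam₀ i⟩
    · refine (AlgHom.mem_range _).2 ⟨lam₀⁻¹ • hp n i, ?_⟩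
      rw [map_smul, rho_hp, smul_smul, inv_mul_cancel₀ hlam₀, one_smul]
      rfl

end Final


/-- Property (1) of the canonical family `Q_{𝔸¹}Ω_{𝔸ⁿ}` (Section 5.2): for every
`λ₀ ≠ 0` there is a `ℂ`-algebra homomorphism `ρ : H → End ℂ (ℂ[x₁,…,xₙ])` with
`ρ(x i) = xᵢ`, `ρ(p i) = λ₀•∂ᵢ` and `ρ(ƛ) = λ₀•1`, whose range is the Weyl algebra
`Aₙ(ℂ)` and whose kernel is exactly the two-sided ideal generated by
`ƛ − λ₀`; i.e. the fiber over `λ₀ ≠ 0` is isomorphic to `Space Aₙ(ℂ)`. -/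
theorem stmt_13 (n : ℕ) (hn : 0 < n) (lam₀ : ℂ) (hlam₀ : lam₀ ≠ 0) :
    ∃ ρ : HWeyl n →ₐ[ℂ] Module.End ℂ (MvPolynomial (Fin n) ℂ),
      (∀ i : Fin n, ρ (hx n i) =
        (LinearMap.mulLeft ℂ (MvPolynomial.X i) :
          Module.End ℂ (MvPolynomial (Fin n) ℂ))) ∧
      (∀ i : Fin n, ρ (hp n i) =
        lam₀ • ((MvPolynomial.pderiv i).toLinearMap :
          Module.End ℂ (MvPolynomial (Fin n) ℂ))) ∧
      ρ (hl n) = lam₀ • (1 : Module.End ℂ (MvPolynomial (Fin n) ℂ)) ∧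
      ρ.range = WeylAlgebra n ∧
      ∀ h : HWeyl n,
        ρ h = 0 ↔ h ∈ TwoSidedIdeal.span {hl n - algebraMap ℂ (HWeyl n) lam₀} := by
  refine ⟨rho n lam₀, fun i => rho_hx lam₀ i, fun i => rho_hp lam₀ i, rho_hl lam₀,
    range_eq lam₀ hlam₀, fun h => ker_iff lam₀ hlam₀ h⟩
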